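/- arXiv:1602.04718 — 3 statements merged into one kernel-verified Lean document; each statement's English description precedes it below -/
import Mathlib

section
/- For every nonnegative, decreasing, convergent real sequence {a_m}, there exist a subsequence {a_{m_k}} and a convex nonincreasing function g : ℝ → ℝ such that g(m_k) = a_{m_k} for all k. -/
/-- Auxiliary interpolation lemma: given a subsequence with rapidly decaying
values and growing gaps, the sup of chord lines is a convex nonincreasing
interpolant. -/
private lemma convex_interp_aux (a : ℕ → ℝ) (l : ℝ) (m : ℕ → ℕ) (hm0 : m 0 = 0)
    (hla : ∀ n, l ≤ a n) (hdecr : Antitone a)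
    (hgap : ∀ k, 2 * m k + 1 ≤ m (k + 1))
    (hhalf : ∀ k, a (m (k + 1)) - l ≤ (a (m k) - l) / 2) :
    ∃ g : ℝ → ℝ, ConvexOn ℝ Set.univ g ∧ Antitone g ∧ ∀ k, g (m k : ℝ) = a (m k) := by
  have hmono : ∀ k, m k < m (k + 1) := fun k => by have := hgap k; omega
  have hMono : Monotone m := (strictMono_nat_of_lt_succ hmono).monotone
  set G : ℕ → ℝ := fun k => (m (k + 1) : ℝ) - (m k : ℝ) with hGdef
  have hGpos : ∀ k, 0 < G k := fun k =>
    sub_pos.2 (by exact_mod_cast hmono k)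
  have hGm : ∀ k, (m k : ℝ) ≤ G k := fun k => by
    have h : (2 * m k + 1 : ℝ) ≤ m (k + 1) := by exact_mod_cast hgap k
    simp only [hGdef]; linarith
  have hGmono : ∀ k, G k ≤ G (k + 1) := fun k => by
    have h1 : (2 * m (k + 1) + 1 : ℝ) ≤ m (k + 2) := by exact_mod_cast hgap (k + 1)
    have h2 : (0 : ℝ) ≤ m k := Nat.cast_nonneg _
    simp only [hGdef]; linarith
  set s : ℕ → ℝ := fun k => (a (m (k + 1)) - a (m k)) / G k with hsdef
  have hsG : ∀ k, s k * G k = a (m (k + 1)) - a (m k) := fun k =>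
    div_mul_cancel₀ _ (hGpos k).ne'
  have hs0 : ∀ k, s k ≤ 0 := fun k =>
    div_nonpos_of_nonpos_of_nonneg
      (sub_nonpos.2 (hdecr (hmono k).le)) (hGpos k).le
  have hsm : ∀ k, s k ≤ s (k + 1) := by
    intro k
    have d1 : 0 ≤ a (m (k + 1)) - l := sub_nonneg.2 (hla _)
    have d2 : 0 ≤ a (m (k + 2)) - l := sub_nonneg.2 (hla _)
    have hh := hhalf k
    have hGk := hGpos k
    have hGk1 := hGpos (k + 1)
    have hGle := hGmono k
    have e1 : s k ≤ (-(a (m (k + 1)) - l)) / G k :=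
      (div_le_div_iff_of_pos_right hGk).2 (by linarith)
    have e2 : (-(a (m (k + 1)) - l)) / G k ≤ (-(a (m (k + 1)) - l)) / G (k + 1) := by
      rw [neg_div, neg_div]
      exact neg_le_neg (div_le_div_of_nonneg_left d1 hGk hGle)
    have e3 : (-(a (m (k + 1)) - l)) / G (k + 1) ≤ s (k + 1) :=
      (div_le_div_iff_of_pos_right hGk1).2 (by linarith)
    linarith
  have hsmono : Monotone s := monotone_nat_of_le_succ hsm
  set L : ℕ → ℝ → ℝ := fun k x => a (m k) + s k * (x - (m k : ℝ)) with hLdef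
  have hLnext : ∀ k, L k (m (k + 1)) = a (m (k + 1)) := by
    intro k
    have h := hsG k
    simp only [hGdef] at h
    simp only [hLdef]
    linarith
  have hLanti : ∀ k x y, x ≤ y → L k y ≤ L k x := by
    intro k x y hxy
    simp only [hLdef]
    have := mul_le_mul_of_nonpos_left (sub_le_sub_right hxy (m k : ℝ)) (hs0 k)
    linarith
  have hforward : ∀ k i, k ≤ i → L k (m i) ≤ a (m i) := by
    intro k i hki
    induction i, hki using Nat.le_induction with
    | base => simp [hLdef]
    | succ i hki ih =>
      have key : L k (m (i + 1)) = L k (m i) + s k * G i := by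
        simp only [hLdef, hGdef]; ring
      have h1 : s k * G i ≤ s i * G i :=
        mul_le_mul_of_nonneg_right (hsmono hki) (hGpos i).le
      have h2 := hsG i
      rw [key]; linarith
  have hbackward : ∀ j k, j ≤ k → L k (m j) ≤ a (m j) := by
    intro j k hjk
    induction k, hjk using Nat.le_induction with
    | base => simp [hLdef]
    | succ k hjk ih =>
      have hx : (m j : ℝ) ≤ (m (k + 1) : ℝ) := by
        exact_mod_cast hMono (by omega : j ≤ k + 1)
      have q1 := hLnext k
      simp only [hLdef] at q1
      have q2 : L k (m j) = a (m (k + 1)) + s k * ((m j : ℝ) - (m (k + 1) : ℝ)) := by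
        simp only [hLdef]
        linear_combination q1
      have q3 : s (k + 1) * ((m j : ℝ) - (m (k + 1) : ℝ)) ≤
          s k * ((m j : ℝ) - (m (k + 1) : ℝ)) :=
        mul_le_mul_of_nonpos_right (hsm k) (by linarith)
      have e : L (k + 1) (m j) ≤ L k (m j) := by
        rw [q2]; simp only [hLdef]; linarith
      linarith
  have hLle : ∀ k j, L k (m j) ≤ a (m j) := by
    intro k j
    rcases le_total k j with h | h
    · exact hforward k j h
    · exact hbackward j k h
  have hbdd : ∀ x : ℝ, BddAbove (Set.range fun k => L k x) := by
    intro x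
    refine ⟨a 0 + (a 0 - l) + (-s 0) * |x|, ?_⟩
    rintro _ ⟨k, rfl⟩
    simp only [hLdef]
    have h1 : a (m k) ≤ a 0 := hdecr (Nat.zero_le _)
    have h2 : -s k ≤ -s 0 := neg_le_neg (hsmono (Nat.zero_le k))
    have h3 : 0 ≤ -s k := neg_nonneg.2 (hs0 k)
    have h4 : (-s k) * (m k : ℝ) ≤ a (m k) - l := by
      have hnum : -s k ≤ (a (m k) - l) / G k := by
        have : -s k = (-(a (m (k + 1)) - a (m k))) / G k := by
          simp only [hsdef]; rw [neg_div]
        rw [this]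
        exact (div_le_div_iff_of_pos_right (hGpos k)).2 (by linarith [hla (m (k + 1))])
      calc (-s k) * (m k : ℝ) ≤ ((a (m k) - l) / G k) * G k := by
            apply mul_le_mul hnum (hGm k) (Nat.cast_nonneg _)
              (div_nonneg (sub_nonneg.2 (hla _)) (hGpos k).le)
        _ = a (m k) - l := div_mul_cancel₀ _ (hGpos k).ne'
    have h5 : s k * x ≤ (-s 0) * |x| := by
      calc s k * x ≤ |s k * x| := le_abs_self _
        _ = (-s k) * |x| := by rw [abs_mul, abs_of_nonpos (hs0 k)]
        _ ≤ (-s 0) * |x| := mul_le_mul_of_nonneg_right h2 (abs_nonneg x)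
    have hexp : s k * (x - (m k : ℝ)) = s k * x + (-s k) * (m k : ℝ) := by ring
    linarith
  refine ⟨fun x => ⨆ k, L k x, ⟨convex_univ, fun x _ y _ t u ht hu htu => ?_⟩, ?_, ?_⟩
  · simp only [smul_eq_mul]
    apply ciSup_le
    intro k
    have heq : L k (t * x + u * y) = t * L k x + u * L k y := by
      simp only [hLdef]
      linear_combination (s k * (m k : ℝ) - a (m k)) * htu
    have h1 : L k x ≤ ⨆ j, L j x := le_ciSup (hbdd x) k
    have h2 : L k y ≤ ⨆ j, L j y := le_ciSup (hbdd y) k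
    rw [heq]
    exact add_le_add (mul_le_mul_of_nonneg_left h1 ht) (mul_le_mul_of_nonneg_left h2 hu)
  · intro x y hxy
    exact ciSup_le fun k => le_trans (hLanti k x y hxy) (le_ciSup (hbdd x) k)
  · intro k
    apply le_antisymm
    · exact ciSup_le fun j => hLle j k
    · have h : L k (m k : ℝ) = a (m k) := by simp [hLdef]
      exact h ▸ le_ciSup (hbdd (m k : ℝ)) k

/-- For every nonnegative, decreasing, convergent real sequence
there is a subsequence which can be interpolated by a convex nonincreasing
function on ℝ. -/
theorem convex_interpolation_of_antitone_sequence
    (a : ℕ → ℝ) (hnonneg : ∀ m, 0 ≤ a m) (hdecr : Antitone a)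
    (hconv : ∃ l : ℝ, Filter.Tendsto a Filter.atTop (nhds l)) :
    ∃ m : ℕ → ℕ, StrictMono m ∧
      ∃ g : ℝ → ℝ, ConvexOn ℝ Set.univ g ∧ Antitone g ∧
        ∀ k, g (m k : ℝ) = a (m k) := by
  obtain ⟨l, hl⟩ := hconv
  have hla : ∀ n, l ≤ a n := fun n =>
    le_of_tendsto hl (Filter.eventually_atTop.2 ⟨n, fun j hj => hdecr hj⟩)
  have H : ∀ j : ℕ, ∃ N : ℕ, ∀ n, N ≤ n → a n - l ≤ (a j - l) / 2 := by
    intro j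
    rcases eq_or_lt_of_le (hla j) with h | h
    · refine ⟨j, fun n hn => ?_⟩
      have h1 := hdecr hn
      have h2 := hla n
      linarith [h.symm]
    · have hev : ∀ᶠ n in Filter.atTop, a n < l + (a j - l) / 2 :=
        hl.eventually (gt_mem_nhds (by linarith))
      obtain ⟨N, hN⟩ := Filter.eventually_atTop.1 hev
      exact ⟨N, fun n hn => by linarith [hN n hn]⟩
  choose N hN using H
  set f : ℕ → ℕ := fun p => max (N p) (2 * p + 1) with hf
  set m : ℕ → ℕ := fun k => f^[k] 0 with hm
  have hm0 : m 0 = 0 := rfl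
  have hmsucc : ∀ k, m (k + 1) = f (m k) := fun k => Function.iterate_succ_apply' f k 0
  have hgap : ∀ k, 2 * m k + 1 ≤ m (k + 1) := fun k => by
    rw [hmsucc]; exact le_max_right _ _
  have hhalf : ∀ k, a (m (k + 1)) - l ≤ (a (m k) - l) / 2 := fun k => by
    rw [hmsucc]; exact hN (m k) _ (le_max_left _ _)
  refine ⟨m, strictMono_nat_of_lt_succ fun k => by have := hgap k; omega, ?_⟩
  exact convex_interp_aux a l m hm0 hla hdecr hgap hhalf
end

section
/- Let {z_m} be a decreasing sequence of reals with 0 < z_m < 1 for all m converging to z > 0. Setting t_m = (z_m)^m and a_m = (z_m)^{m+1}, there exists a subsequence along which (a_{k+1} - a_k)/(t_{k+1} - t_k) ≥ (a_{k+2} - a_{k+1})/(t_{k+2} - t_{k+1}) holds, and hence a convex function g : ℝ → ℝ with g(t_{m_k}) = a_{m_k}. -/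
open Filter


/-- For a decreasing sequence z with 0 < z m < 1 converging to a
positive limit, setting t m = (z m)^m and a m = (z m)^(m+1), there is a
subsequence along which the chord-slope condition holds, and hence a convex
function interpolating the corresponding points. -/
theorem convex_interpolation_powers
    (z : ℕ → ℝ) (hz : StrictAnti z)
    (hpos : ∀ m, 0 < z m) (hlt1 : ∀ m, z m < 1)
    (zl : ℝ) (hconv : Filter.Tendsto z Filter.atTop (nhds zl)) (hzl : 0 < zl)
    (t a : ℕ → ℝ)
    (hta : ∀ m, t m = (z m) ^ m) (haa : ∀ m, a m = (z m) ^ (m + 1)) :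
    ∃ φ : ℕ → ℕ, StrictMono φ ∧
      (∀ k : ℕ,
        (a (φ (k + 1)) - a (φ k)) / (t (φ (k + 1)) - t (φ k)) ≥
          (a (φ (k + 2)) - a (φ (k + 1))) / (t (φ (k + 2)) - t (φ (k + 1)))) ∧
      ∃ g : ℝ → ℝ, ConvexOn ℝ Set.univ g ∧ ∀ k, g (t (φ k)) = a (φ k) := by
  classical
  have hz1 : z 1 < 1 := lt_trans (hz (by norm_num)) (hlt1 0)
  have hz1' : 0 ≤ z 1 := (hpos 1).le
  have ht_pos : ∀ m, 0 < t m := fun m => (hta m) ▸ pow_pos (hpos m) m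
  have ha_pos : ∀ m, 0 < a m := fun m => (haa m) ▸ pow_pos (hpos m) (m + 1)
  have ht_anti : ∀ {m n : ℕ}, m < n → t n < t m := by
    intro m n hmn
    rw [hta, hta]
    calc z n ^ n < z m ^ n := by
          exact pow_lt_pow_left₀ (hz hmn) (hpos n).le (by omega : n ≠ 0)
      _ ≤ z m ^ m := pow_le_pow_of_le_one (hpos m).le (hlt1 m).le hmn.le
  have ha_anti : ∀ {m n : ℕ}, m < n → a n < a m := by
    intro m n hmn
    rw [haa, haa]
    calc z n ^ (n+1) < z m ^ (n+1) := by
          exact pow_lt_pow_left₀ (hz hmn) (hpos n).le (Nat.succ_ne_zero n)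
      _ ≤ z m ^ (m+1) := pow_le_pow_of_le_one (hpos m).le (hlt1 m).le (by omega)
  have hgeo : Tendsto (fun n => z 1 ^ n) atTop (nhds 0) :=
    tendsto_pow_atTop_nhds_zero_of_lt_one hz1' hz1
  have ht0 : Tendsto t atTop (nhds 0) := by
    apply tendsto_of_tendsto_of_tendsto_of_le_of_le' tendsto_const_nhds hgeo
    · exact Eventually.of_forall fun n => (ht_pos n).le
    · filter_upwards [eventually_ge_atTop 1] with n hn
      rw [hta]
      exact pow_le_pow_left₀ (hpos n).le (hz.antitone hn) n
  have ha0 : Tendsto a atTop (nhds 0) := by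
    apply tendsto_of_tendsto_of_tendsto_of_le_of_le' tendsto_const_nhds hgeo
    · exact Eventually.of_forall fun n => (ha_pos n).le
    · filter_upwards [eventually_ge_atTop 1] with n hn
      rw [haa]
      calc z n ^ (n+1) ≤ z n ^ n :=
            pow_le_pow_of_le_one (hpos n).le (hlt1 n).le (by omega)
        _ ≤ z 1 ^ n := pow_le_pow_left₀ (hpos n).le (hz.antitone hn) n
  set S : ℕ → ℕ → ℝ := fun m n => (a m - a n) / (t m - t n) with hS
  have hamt : ∀ m, a m = z m * t m := by
    intro m; rw [haa, hta, pow_succ]; ring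
  have key : ∀ m s, z m < s → ∃ n, m < n ∧ S m n ≤ s ∧ z n < S m n := by
    intro m s hs
    have hlim : Tendsto (fun n => S m n) atTop (nhds (z m)) := by
      have h := Filter.Tendsto.div
        ((tendsto_const_nhds : Tendsto (fun _ : ℕ => a m) atTop (nhds (a m))).sub ha0)
        ((tendsto_const_nhds : Tendsto (fun _ : ℕ => t m) atTop (nhds (t m))).sub ht0)
        (by simpa using (ht_pos m).ne')
      have heq : (a m - 0) / (t m - 0) = z m := by
        rw [sub_zero, sub_zero, hamt m, mul_div_assoc, div_self (ht_pos m).ne', mul_one]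
      rw [heq] at h
      exact h
    have hev : ∀ᶠ n in atTop, S m n < s := hlim.eventually_lt_const hs
    obtain ⟨n, hn1, hn2⟩ := ((eventually_ge_atTop (m+1)).and hev).exists
    refine ⟨n, by omega, hn2.le, ?_⟩
    have hmn : m < n := by omega
    have hden : 0 < t m - t n := sub_pos.2 (ht_anti hmn)
    rw [hS, lt_div_iff₀ hden, hamt m, hamt n]
    have hzn : z n < z m := hz hmn
    nlinarith [ht_pos m]
  have key' : ∀ p : ℕ × ℝ, ∃ n, z p.1 < p.2 → p.1 < n ∧ S p.1 n ≤ p.2 ∧ z n < S p.1 n := by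
    intro p
    by_cases h : z p.1 < p.2
    · obtain ⟨n, hn⟩ := key p.1 p.2 h
      exact ⟨n, fun _ => hn⟩
    · exact ⟨0, fun h' => absurd h' h⟩
  choose nxt hnxt using key'
  set F : ℕ → ℕ × ℝ := fun k =>
    Nat.rec ((0 : ℕ), z 0 + 1) (fun _ p => (nxt p, S p.1 (nxt p))) k with hF
  have hFs : ∀ k, F (k+1) = (nxt (F k), S (F k).1 (nxt (F k))) := fun k => rfl
  have hinv : ∀ k, z (F k).1 < (F k).2 := by
    intro k; induction k with
    | zero => show z 0 < z 0 + 1; linarith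
    | succ k ih =>
      have h := hnxt (F k) ih
      rw [hFs k]
      exact h.2.2
  have hstep : ∀ k, (F k).1 < (F (k+1)).1 ∧ (F (k+1)).2 ≤ (F k).2 ∧
      (F (k+1)).2 = S (F k).1 (F (k+1)).1 := by
    intro k
    have h := hnxt (F k) (hinv k)
    rw [hFs k]
    exact ⟨h.1, h.2.1, rfl⟩
  set φ : ℕ → ℕ := fun k => (F k).1 with hφdef
  have hφ : StrictMono φ := strictMono_nat_of_lt_succ fun k => (hstep k).1
  have hSflip : ∀ m n : ℕ, (a n - a m) / (t n - t m) = S m n := by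
    intro m n
    rw [hS]
    rw [← neg_sub (a m) (a n), ← neg_sub (t m) (t n), neg_div_neg_eq]
  refine ⟨φ, hφ, ?_, ?_⟩
  · intro k
    rw [ge_iff_le, hSflip, hSflip, ← (hstep k).2.2, ← (hstep (k+1)).2.2]
    exact (hstep (k+1)).2.1
  -- convex part
  set x : ℕ → ℝ := fun k => t (φ k) with hx
  set y : ℕ → ℝ := fun k => a (φ k) with hy
  set sl : ℕ → ℝ := fun k => (F (k+1)).2 with hsl
  have hx_step : ∀ k, x (k+1) < x k := fun k => ht_anti (hφ (Nat.lt_succ_self k))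
  have hx_mono : ∀ {j k : ℕ}, j ≤ k → x k ≤ x j := by
    intro j k hjk
    rcases eq_or_lt_of_le hjk with h | h
    · rw [h]
    · exact (ht_anti (hφ h)).le
  have hx_pos : ∀ k, 0 < x k := fun k => ht_pos _
  have hy_mono : ∀ {j k : ℕ}, j ≤ k → y k ≤ y j := by
    intro j k hjk
    rcases eq_or_lt_of_le hjk with h | h
    · rw [h]
    · exact (ha_anti (hφ h)).le
  have hsl_pos : ∀ k, 0 < sl k := by
    intro k
    exact lt_trans (hpos ((F (k+1)).1)) (hinv (k+1))
  have hsl_anti' : Antitone sl := antitone_nat_of_succ_le fun k => (hstep (k+1)).2.1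
  have hsl_anti : ∀ {j k : ℕ}, j ≤ k → sl k ≤ sl j := fun h => hsl_anti' h
  have hchord : ∀ k, y (k+1) = y k + sl k * (x (k+1) - x k) := by
    intro k
    have h := (hstep k).2.2
    have hd : x k - x (k+1) ≠ 0 := sub_ne_zero.2 (hx_step k).ne'
    have : sl k = (y k - y (k+1)) / (x k - x (k+1)) := h
    field_simp [hd] at this
    linarith
  set L : ℕ → ℝ → ℝ := fun k u => y k + sl k * (u - x k) with hL
  have hbdd : ∀ u : ℝ, BddAbove (Set.range fun k => L k u) := by
    intro u
    refine ⟨y 0 + sl 0 * (|u| + x 0), ?_⟩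
    rintro v ⟨k, rfl⟩
    have h1 : y k ≤ y 0 := hy_mono (Nat.zero_le k)
    have h2 : sl k ≤ sl 0 := hsl_anti (Nat.zero_le k)
    have h3 : u - x k ≤ |u| + x 0 := by
      have := le_abs_self u
      have := hx_pos k
      have := hx_pos 0
      linarith
    have h4 : sl k * (u - x k) ≤ sl 0 * (|u| + x 0) := by
      calc sl k * (u - x k) ≤ sl k * (|u| + x 0) :=
            mul_le_mul_of_nonneg_left h3 (hsl_pos k).le
        _ ≤ sl 0 * (|u| + x 0) := by
            apply mul_le_mul_of_nonneg_right h2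
            have := abs_nonneg u; have := hx_pos 0; linarith
    show y k + sl k * (u - x k) ≤ _
    linarith
  have hle : ∀ j k, L k (x j) ≤ y j := by
    have A : ∀ d k, L k (x (k + d)) ≤ y (k + d) := by
      intro d
      induction d with
      | zero => intro k; simp [hL]
      | succ d ih =>
        intro k
        have ih' := ih k
        have hslk : sl (k+d) ≤ sl k := hsl_anti (Nat.le_add_right k d)
        have hxd : x (k+d+1) < x (k+d) := hx_step (k+d)
        have hch := hchord (k+d)
        have expand : L k (x (k+d+1)) = L k (x (k+d)) + sl k * (x (k+d+1) - x (k+d)) := by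
          simp only [hL]; ring
        have hmul : sl k * (x (k+d+1) - x (k+d)) ≤ sl (k+d) * (x (k+d+1) - x (k+d)) := by
          apply mul_le_mul_of_nonpos_right hslk
          linarith
        have : (k + (d+1)) = (k+d+1) := by omega
        rw [this]
        linarith
    have B : ∀ d j, L (j + d) (x j) ≤ y j := by
      intro d
      induction d with
      | zero => intro j; simp [hL]
      | succ d ih =>
        intro j
        have ih' := ih j
        have hch := hchord (j+d)
        have hslk : sl (j+d+1) ≤ sl (j+d) := hsl_anti (Nat.le_succ _)
        have hxj : x (j+d+1) ≤ x j := hx_mono (show j ≤ j+d+1 by omega)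
        have : (j + (d+1)) = (j+d+1) := by omega
        rw [this]
        simp only [hL] at ih' ⊢
        nlinarith [hsl_pos (j+d)]
    intro j k
    rcases le_or_gt k j with h | h
    · obtain ⟨d, rfl⟩ := Nat.exists_eq_add_of_le h
      exact A d k
    · obtain ⟨d, rfl⟩ := Nat.exists_eq_add_of_le h.le
      exact B d j
  refine ⟨fun u => ⨆ k, L k u, ⟨convex_univ, ?_⟩, ?_⟩
  · intro u _ v _ α β hα hβ hαβ
    simp only [smul_eq_mul]
    apply ciSup_le
    intro k
    have h1 : L k u ≤ ⨆ k, L k u := le_ciSup (hbdd u) k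
    have h2 : L k v ≤ ⨆ k, L k v := le_ciSup (hbdd v) k
    have heq : L k (α * u + β * v) = α * L k u + β * L k v := by
      simp only [hL]
      have hβ' : β = 1 - α := by linarith
      subst hβ'
      ring
    rw [heq]
    exact add_le_add (mul_le_mul_of_nonneg_left h1 hα) (mul_le_mul_of_nonneg_left h2 hβ)
  · intro k
    show (⨆ j, L j (t (φ k))) = a (φ k)
    have hxx : t (φ k) = x k := rfl
    have hyy : a (φ k) = y k := rfl
    rw [hxx, hyy]
    apply le_antisymm
    · exact ciSup_le fun j => hle k j
    · have h := le_ciSup (hbdd (x k)) k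
      have : L k (x k) = y k := by simp [hL]
      linarith
end

section
/- Let {z_m} be a converging sequence of nonnegative reals with positive limit z. Then there exist a subsequence {z_{m_k}}, a strictly decreasing sequence {t_k} of positive reals with t_k → 0, and a convex function g : ℝ → ℝ such that g(t_k) = ±t_k · z_{m_k} · c for an appropriate constant c > 0 and sign depending on whether {z_{m_k}} is monotone nonincreasing or increasing and whether z < 1 or z > 1. -/
/-!
Pass to a subsequence `w` of `z` that is constant equal to the limit `l`, or strictly decreasing
to `l`, or strictly increasing to `l`. In the constant case the points `(tₖ, tₖ l)` lie on a line.
Otherwise let `ε = ±1` be the direction of approach and put `tₖ = ε wₖ / l - ε`, a strictly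
decreasing null sequence. Then `tₖ + ε = ε wₖ / l`, so the convex parabola `g x = x (x + ε)`
satisfies `g tₖ = ε tₖ wₖ / l`.
-/

open Filter Topology

section Extraction

variable {α : Type*} [LinearOrder α] [TopologicalSpace α] [OrderClosedTopology α]
  {u : ℕ → α} {a : α}

theorem Filter.Tendsto.exists_strictAnti_subseq_of_frequently_gt (hu : Tendsto u atTop (𝓝 a))
    (hfreq : ∃ᶠ n in atTop, a < u n) : ∃ φ : ℕ → ℕ, StrictMono φ ∧ StrictAnti (u ∘ φ) := by
  have step : ∀ n : {n // a < u n}, ∃ m : {n // a < u n}, (n : ℕ) < m ∧ u m < u n := by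
    rintro ⟨n, hn⟩
    have hlater : ∀ᶠ m in atTop, n < m ∧ u m < u n :=
      (eventually_gt_atTop n).and (hu.eventually (Iio_mem_nhds hn))
    obtain ⟨m, hm, hnm, hmn⟩ := (hfreq.and_eventually hlater).exists
    exact ⟨⟨m, hm⟩, hnm, hmn⟩
  choose next hnext_gt hnext_lt using step
  obtain ⟨n₀, hn₀⟩ := hfreq.exists
  refine ⟨fun k => (next^[k] ⟨n₀, hn₀⟩ : ℕ), strictMono_nat_of_lt_succ fun k => ?_,
    strictAnti_nat_of_succ_lt fun k => ?_⟩
  · simpa only [Function.iterate_succ_apply'] using hnext_gt _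
  · simpa only [Function.comp_apply, Function.iterate_succ_apply'] using hnext_lt _

theorem Filter.Tendsto.exists_strictMono_subseq_of_frequently_lt (hu : Tendsto u atTop (𝓝 a))
    (hfreq : ∃ᶠ n in atTop, u n < a) : ∃ φ : ℕ → ℕ, StrictMono φ ∧ StrictMono (u ∘ φ) :=
  Filter.Tendsto.exists_strictAnti_subseq_of_frequently_gt (α := αᵒᵈ) hu hfreq

end Extraction

def ConvexInterpolable (w : ℕ → ℝ) : Prop :=
  ∃ t : ℕ → ℝ, StrictAnti t ∧ (∀ k, 0 < t k) ∧ Tendsto t atTop (𝓝 0) ∧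
    ∃ c : ℝ, 0 < c ∧ ∃ ε : ℝ, (ε = 1 ∨ ε = -1) ∧
      ∃ g : ℝ → ℝ, ConvexOn ℝ Set.univ g ∧ ∀ k, g (t k) = ε * (t k * w k * c)

theorem StrictAnti.lt_of_tendsto {α : Type*} [TopologicalSpace α] [Preorder α]
    [OrderClosedTopology α] {t : ℕ → α} {a : α} (ht : StrictAnti t)
    (hlim : Tendsto t atTop (𝓝 a)) (k : ℕ) : a < t k :=
  (ht.antitone.le_of_tendsto hlim (k + 1)).trans_lt (ht k.lt_succ_self)

theorem convexOn_univ_mul_add_const (ε : ℝ) : ConvexOn ℝ Set.univ fun x : ℝ => x * (x + ε) := by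
  have hsplit : (fun x : ℝ => x * (x + ε)) = (fun x => x ^ 2) + ⇑(LinearMap.mul ℝ ℝ ε) := by
    ext x
    simp only [Pi.add_apply, LinearMap.mul_apply']
    ring
  rw [hsplit]
  exact (Even.convexOn_pow even_two).add ((LinearMap.mul ℝ ℝ ε).convexOn convex_univ)

theorem convexInterpolable_const (a : ℝ) : ConvexInterpolable fun _ => a := by
  have ht_anti : StrictAnti fun k : ℕ => (1 / 2 : ℝ) ^ k :=
    pow_right_strictAnti₀ (by norm_num) (by norm_num)
  have ht_lim : Tendsto (fun k : ℕ => (1 / 2 : ℝ) ^ k) atTop (𝓝 0) :=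
    tendsto_pow_atTop_nhds_zero_of_lt_one (by norm_num) (by norm_num)
  refine ⟨_, ht_anti, ht_anti.lt_of_tendsto ht_lim, ht_lim, 1, one_pos, 1, Or.inl rfl,
    LinearMap.mul ℝ ℝ a, (LinearMap.mul ℝ ℝ a).convexOn convex_univ, fun k => ?_⟩
  simp only [LinearMap.mul_apply']
  ring

theorem convexInterpolable_of_tendsto_of_strictAnti_mul {w : ℕ → ℝ} {l ε : ℝ} (hl : 0 < l)
    (hε : ε = 1 ∨ ε = -1) (hw : Tendsto w atTop (𝓝 l)) (hanti : StrictAnti fun k => ε * w k) :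
    ConvexInterpolable w := by
  set t : ℕ → ℝ := fun k => ε * w k / l - ε
  have ht_anti : StrictAnti t := fun i j hij =>
    sub_lt_sub_right (div_lt_div_of_pos_right (hanti hij) hl) ε
  have ht_lim : Tendsto t atTop (𝓝 0) := by
    simpa [hl.ne'] using ((hw.const_mul ε).div_const l).sub_const ε
  refine ⟨t, ht_anti, ht_anti.lt_of_tendsto ht_lim, ht_lim, l⁻¹, inv_pos.mpr hl, ε, hε,
    _, convexOn_univ_mul_add_const ε, fun k => ?_⟩
  rw [show t k + ε = ε * w k / l from sub_add_cancel _ _]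
  ring

theorem convex_interpolation_of_nonneg_sequence_general
    (z : ℕ → ℝ)
    (zl : ℝ) (hconv : Filter.Tendsto z Filter.atTop (nhds zl)) (hzl : 0 < zl) :
    ∃ φ : ℕ → ℕ, StrictMono φ ∧
      ∃ t : ℕ → ℝ, StrictAnti t ∧ (∀ k, 0 < t k) ∧
        Filter.Tendsto t Filter.atTop (nhds 0) ∧
        ∃ c : ℝ, 0 < c ∧ ∃ ε : ℝ, (ε = 1 ∨ ε = -1) ∧
          ∃ g : ℝ → ℝ, ConvexOn ℝ Set.univ g ∧
            ∀ k, g (t k) = ε * (t k * z (φ k) * c) := by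
  suffices ∃ φ : ℕ → ℕ, StrictMono φ ∧ ConvexInterpolable (z ∘ φ) from this
  have hcases : (∃ᶠ m in atTop, z m < zl) ∨ (∃ᶠ m in atTop, z m = zl) ∨
      ∃ᶠ m in atTop, zl < z m := by
    simp only [← frequently_or_distrib]
    exact Frequently.of_forall fun m => lt_trichotomy (z m) zl
  rcases hcases with hbelow | hequal | habove
  · obtain ⟨φ, hφ, hmono⟩ := hconv.exists_strictMono_subseq_of_frequently_lt hbelow
    exact ⟨φ, hφ, convexInterpolable_of_tendsto_of_strictAnti_mul hzl (Or.inr rfl)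
      (hconv.comp hφ.tendsto_atTop) (by simpa using hmono.neg)⟩
  · obtain ⟨φ, hφ, hzφ⟩ := extraction_of_frequently_atTop hequal
    refine ⟨φ, hφ, ?_⟩
    rw [show z ∘ φ = fun _ => zl from funext hzφ]
    exact convexInterpolable_const zl
  · obtain ⟨φ, hφ, hanti⟩ := hconv.exists_strictAnti_subseq_of_frequently_gt habove
    exact ⟨φ, hφ, convexInterpolable_of_tendsto_of_strictAnti_mul hzl (Or.inl rfl)
      (hconv.comp hφ.tendsto_atTop) (by simpa only [one_mul] using hanti)⟩

/-- For any converging sequence of nonnegative reals with positive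
limit, there exist a subsequence, a strictly decreasing positive null sequence
t_k and a convex function g with g (t k) = ± t k * z (φ k) * c for an
appropriate constant c > 0 and sign ε = ±1. -/
theorem convex_interpolation_of_nonneg_sequence
    (z : ℕ → ℝ) (hnonneg : ∀ m, 0 ≤ z m)
    (zl : ℝ) (hconv : Filter.Tendsto z Filter.atTop (nhds zl)) (hzl : 0 < zl) :
    ∃ φ : ℕ → ℕ, StrictMono φ ∧
      ∃ t : ℕ → ℝ, StrictAnti t ∧ (∀ k, 0 < t k) ∧
        Filter.Tendsto t Filter.atTop (nhds 0) ∧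
        ∃ c : ℝ, 0 < c ∧ ∃ ε : ℝ, (ε = 1 ∨ ε = -1) ∧
          ∃ g : ℝ → ℝ, ConvexOn ℝ Set.univ g ∧
            ∀ k, g (t k) = ε * (t k * z (φ k) * c) :=
  convex_interpolation_of_nonneg_sequence_general z zl hconv hzl
end
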